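/- arXiv:2112.14960 — 5 statements merged into one kernel-verified Lean document; each statement's English description precedes it below -/
import Mathlib

section
/- Let n > m ≥ 2. There exists a 2-edge-coloring of K_{N,N} with N = n+m−2 containing neither a red C_{2m} nor a blue C_{2n}. Hence br(C_{2n}, C_{2m}) ≥ m + n − 1. -/
def hasCycleLength {V : Type*} (G : SimpleGraph V) (l : ℕ) : Prop :=
  ∃ (v : V) (p : G.Walk v v), p.IsCycle ∧ p.length = l

/-!
A cycle of length `2k` uses `k` pairwise disjoint edges, so every set of vertices meeting all
of its edges has at least `k` elements. Colour an edge of `K_{α,β}` red when its endpoint in `β`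
lies in a fixed set `R`, blue otherwise: then `R` meets every red edge and `Rᶜ` every blue one.
Taking `|R| = m - 1` and `|Rᶜ| ≤ n - 1`, which is possible once `|β| ≤ m + n - 2`, rules out
both a red `C_{2m}` and a blue `C_{2n}`.
-/

open Finset SimpleGraph

namespace SimpleGraph.Walk.IsCycle

variable {V : Type*} {G : SimpleGraph V} {u : V} {p : G.Walk u u}

/-- The edges `v₂ⱼ₊₁ v₂ⱼ₊₂` of the cycle are pairwise disjoint and each contributes a vertex
of `T`. -/
theorem length_div_two_le_card (hp : p.IsCycle) {T : Finset V}
    (hT : ∀ v w, G.Adj v w → v ∈ T ∨ w ∈ T) : p.length / 2 ≤ #T := by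
  have hcover : ∀ j : Fin (p.length / 2),
      ∃ i, (i = 2 * (j : ℕ) + 1 ∨ i = 2 * (j : ℕ) + 2) ∧ p.getVert i ∈ T := by
    intro j
    rcases hT _ _ (p.adj_getVert_succ (i := 2 * (j : ℕ) + 1) (by omega)) with h | h
    exacts [⟨_, .inl rfl, h⟩, ⟨_, .inr rfl, h⟩]
  choose i hi hiT using hcover
  have hinj : Function.Injective fun j => p.getVert (i j) := by
    intro j₁ j₂ h
    have hmem : ∀ j, i j ∈ {i | 1 ≤ i ∧ i ≤ p.length} := fun j => by
      have := hi j; simp only [Set.mem_ofPred_eq]; omega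
    have := hp.getVert_injOn (hmem j₁) (hmem j₂) h
    ext; have := hi j₁; have := hi j₂; omega
  simpa using card_le_card_of_injOn (s := univ) _ (fun j _ => hiT j) hinj.injOn

end SimpleGraph.Walk.IsCycle

theorem not_hasCycleLength_of_forall_adj_mem {V : Type*} {G : SimpleGraph V} {T : Finset V}
    (hT : ∀ v w, G.Adj v w → v ∈ T ∨ w ∈ T) {k : ℕ} (hk : #T < k) :
    ¬ hasCycleLength G (2 * k) := by
  rintro ⟨_, p, hp, hlen⟩
  have := hp.length_div_two_le_card hT
  omega

section CompleteBipartiteGraphTo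

variable (α : Type*) {β : Type*}

def completeBipartiteGraphTo (R : Finset β) : SimpleGraph (α ⊕ β) where
  Adj
    | .inl _, .inr b => b ∈ R
    | .inr b, .inl _ => b ∈ R
    | _, _ => False
  symm := ⟨by rintro (_ | _) (_ | _) <;> simp⟩
  loopless := ⟨by rintro (_ | _) <;> simp⟩

variable {α}

theorem completeBipartiteGraphTo_le (R : Finset β) :
    completeBipartiteGraphTo α R ≤ completeBipartiteGraph α β := by
  rintro (_ | _) (_ | _) <;> simp [completeBipartiteGraphTo]

theorem completeBipartiteGraph_sdiff_completeBipartiteGraphTo [Fintype β] [DecidableEq β]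
    (R : Finset β) :
    completeBipartiteGraph α β \ completeBipartiteGraphTo α R = completeBipartiteGraphTo α Rᶜ := by
  ext (_ | _) (_ | _) <;> simp [completeBipartiteGraphTo]

theorem not_hasCycleLength_completeBipartiteGraphTo (R : Finset β) {k : ℕ} (hk : #R < k) :
    ¬ hasCycleLength (completeBipartiteGraphTo α R) (2 * k) :=
  not_hasCycleLength_of_forall_adj_mem (T := R.map .inr)
    (by rintro (_ | _) (_ | _) h <;> simp_all [completeBipartiteGraphTo]) (by simpa)

end CompleteBipartiteGraphTo

theorem exists_red_blue_not_hasCycleLength {α β : Type*} [Fintype β] {m n : ℕ}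
    (hm : 0 < m) (hn : 0 < n) (hβ : Fintype.card β + 2 ≤ m + n) :
    ∃ red : SimpleGraph (α ⊕ β), red ≤ completeBipartiteGraph α β ∧
      ¬ hasCycleLength red (2 * m) ∧
      ¬ hasCycleLength (completeBipartiteGraph α β \ red) (2 * n) := by
  classical
  obtain ⟨R, -, hR⟩ :=
    exists_subset_card_eq (s := (univ : Finset β)) (min_le_left (Fintype.card β) (m - 1))
  refine ⟨completeBipartiteGraphTo α R, completeBipartiteGraphTo_le R,
    not_hasCycleLength_completeBipartiteGraphTo R (by omega), ?_⟩
  rw [completeBipartiteGraph_sdiff_completeBipartiteGraphTo]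
  exact not_hasCycleLength_completeBipartiteGraphTo _ (by rw [card_compl]; omega)

/-- For `n > m ≥ 2` there is a red/blue coloring of `K_{N,N}` with `N = n + m - 2`
having neither a red `C_{2m}` nor a blue `C_{2n}`; hence `br(C_{2n}, C_{2m}) ≥ m + n - 1`. -/
theorem bipartite_ramsey_cycles_lower_offdiag (n m : ℕ) (hm : 2 ≤ m) (hmn : m < n) :
    (∃ red : SimpleGraph (Fin (n + m - 2) ⊕ Fin (n + m - 2)),
      red ≤ completeBipartiteGraph (Fin (n + m - 2)) (Fin (n + m - 2)) ∧
      ¬ hasCycleLength red (2 * m) ∧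
      ¬ hasCycleLength
          (completeBipartiteGraph (Fin (n + m - 2)) (Fin (n + m - 2)) \ red) (2 * n)) ∧
    (∀ N : ℕ,
      (∀ red : SimpleGraph (Fin N ⊕ Fin N),
        red ≤ completeBipartiteGraph (Fin N) (Fin N) →
          hasCycleLength red (2 * m) ∨
          hasCycleLength (completeBipartiteGraph (Fin N) (Fin N) \ red) (2 * n)) →
      m + n - 1 ≤ N) := by
  refine ⟨exists_red_blue_not_hasCycleLength (by omega) (by omega) ?_, fun N hN => ?_⟩
  · rw [Fintype.card_fin]; omega
  by_contra! hN_small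
  obtain ⟨red, hle, hred, hblue⟩ := exists_red_blue_not_hasCycleLength (α := Fin N)
    (β := Fin N) (m := m) (n := n) (by omega) (by omega) (by rw [Fintype.card_fin]; omega)
  exact (hN red hle).elim hred hblue
end

section
/- For m ≥ 2, there exists a 2-edge-coloring of K_{2m−1, 2m−1} containing no monochromatic C_{2m}. Hence br(C_{2m}, C_{2m}) ≥ 2m. -/
/-!
Deleting `x` splits the red graph into `X₁ ∪ Y₁`, `X₂ ∪ Y₂` and `{y}`, and deleting `y` splits
the blue graph into `X₁ ∪ Y₂`, `X₂ ∪ Y₁` and `{x}`. A cycle passes through a cut vertex at most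
once, so it lies in a single piece together with the cut vertex: at most `2m - 1` vertices, too
few for a `C_{2m}`. Restricting this colouring to `K_{N,N}` handles every `N < 2m`.
-/

open Finset

namespace SimpleGraph

variable {V W ι : Type*} {G : SimpleGraph V} {hub : V} {ρ : V → ι}

theorem hasCycleLength_of_le_comap {H : SimpleGraph W} {f : V → W} (hf : f.Injective)
    (hle : G ≤ H.comap f) {l : ℕ} (hG : hasCycleLength G l) : hasCycleLength H l := by
  obtain ⟨v, p, hp, rfl⟩ := hG
  let φ : G →g H := ⟨f, fun h => hle h⟩
  exact ⟨f v, p.map φ, hp.map hf, p.length_map φ⟩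

def IsSeparatedBy (G : SimpleGraph V) (hub : V) (ρ : V → ι) : Prop :=
  ∀ ⦃u v⦄, G.Adj u v → u ≠ hub → v ≠ hub → ρ u = ρ v

namespace Walk

theorem class_eq_of_hub_notMem (hG : G.IsSeparatedBy hub ρ) {u v : V} (p : G.Walk u v)
    (hp : hub ∉ p.support) : ∀ x ∈ p.support, ρ x = ρ v := by
  induction p with
  | nil => simp
  | cons h q ih =>
    rw [support_cons, List.mem_cons, not_or] at hp
    have hq := ih hp.2
    intro x hx
    rcases List.mem_cons.1 hx with rfl | hx
    · exact (hG h (Ne.symm hp.1) fun h' => hp.2 (h' ▸ q.start_mem_support)).trans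
        (hq _ q.start_mem_support)
    · exact hq x hx

theorem IsPath.eq_hub_or_class_eq (hG : G.IsSeparatedBy hub ρ) {v : V} {p : G.Walk hub v}
    (hp : p.IsPath) : ∀ x ∈ p.support, x = hub ∨ ρ x = ρ v := by
  cases p with
  | nil => simp
  | cons h q =>
    rw [cons_isPath_iff] at hp
    intro x hx
    rcases List.mem_cons.1 hx with rfl | hx
    · exact .inl rfl
    · exact .inr (q.class_eq_of_hub_notMem hG hp.2 x hx)

theorem IsCycle.exists_eq_hub_or_class_eq_of_start (hG : G.IsSeparatedBy hub ρ)
    {p : G.Walk hub hub} (hp : p.IsCycle) : ∃ c, ∀ x ∈ p.support, x = hub ∨ ρ x = c := by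
  cases p with
  | nil => exact absurd hp not_isCycle_nil
  | @cons _ v _ h q =>
    have hq := ((cons_isCycle_iff q h).1 hp).1.reverse.eq_hub_or_class_eq hG
    refine ⟨ρ v, fun x hx => ?_⟩
    rcases List.mem_cons.1 hx with rfl | hx
    · exact .inl rfl
    · exact hq x (by rwa [support_reverse, List.mem_reverse])

theorem IsCycle.exists_eq_hub_or_class_eq (hG : G.IsSeparatedBy hub ρ) {v : V}
    {p : G.Walk v v} (hp : p.IsCycle) : ∃ c, ∀ x ∈ p.support, x = hub ∨ ρ x = c := by
  classical
  by_cases hhub : hub ∈ p.support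
  · obtain ⟨c, hc⟩ := (hp.rotate hhub).exists_eq_hub_or_class_eq_of_start hG
    exact ⟨c, fun x hx => hc x ((p.mem_support_rotate_iff hub hhub).2 hx)⟩
  · exact ⟨ρ v, fun x hx => .inr (p.class_eq_of_hub_notMem hG hhub x hx)⟩

theorem IsCycle.length_le_card {v : V} {p : G.Walk v v} (hp : p.IsCycle) {s : Finset V}
    (hs : ∀ x ∈ p.support, x ∈ s) : p.length ≤ #s := by
  classical
  calc p.length = p.support.tail.toFinset.card := by
        rw [List.toFinset_card_of_nodup hp.support_nodup, List.length_tail, length_support]; rfl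
    _ ≤ #s := card_le_card fun x hx => hs x (List.mem_of_mem_tail (List.mem_toFinset.1 hx))

end Walk

theorem not_hasCycleLength_of_isSeparatedBy [Fintype V] [DecidableEq ι]
    (hG : G.IsSeparatedBy hub ρ) {l : ℕ} (hl : ∀ c, #{x | ρ x = c} + 1 < l) :
    ¬ hasCycleLength G l := by
  classical
  rintro ⟨v, p, hp, rfl⟩
  obtain ⟨c, hc⟩ := hp.exists_eq_hub_or_class_eq hG
  have hlen := hp.length_le_card (s := insert hub ({x | ρ x = c} : Finset V)) fun x hx => by
    simpa using hc x hx
  have hinsert := card_insert_le hub ({x | ρ x = c} : Finset V)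
  have hclass := hl c
  omega

variable {α β : Type*}

def bipartiteOfRel (r : α → β → Prop) : SimpleGraph (α ⊕ β) where
  Adj
    | .inl a, .inr b => r a b
    | .inr b, .inl a => r a b
    | _, _ => False
  symm := ⟨by rintro (_ | _) (_ | _) h <;> exact h⟩
  loopless := ⟨by rintro (_ | _) h <;> exact h⟩

@[simp] theorem bipartiteOfRel_adj_inl_inr {r : α → β → Prop} {a : α} {b : β} :
    (bipartiteOfRel r).Adj (.inl a) (.inr b) ↔ r a b := Iff.rfl

@[simp] theorem bipartiteOfRel_adj_inr_inl {r : α → β → Prop} {a : α} {b : β} :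
    (bipartiteOfRel r).Adj (.inr b) (.inl a) ↔ r a b := Iff.rfl

@[simp] theorem not_bipartiteOfRel_adj_inl_inl {r : α → β → Prop} {a a' : α} :
    ¬ (bipartiteOfRel r).Adj (.inl a) (.inl a') := id

@[simp] theorem not_bipartiteOfRel_adj_inr_inr {r : α → β → Prop} {b b' : β} :
    ¬ (bipartiteOfRel r).Adj (.inr b) (.inr b') := id

theorem bipartiteOfRel_le_completeBipartiteGraph (r : α → β → Prop) :
    bipartiteOfRel r ≤ completeBipartiteGraph α β := by
  rintro (_ | _) (_ | _) h <;> first | exact h.elim | simp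

theorem completeBipartiteGraph_sdiff_bipartiteOfRel (r : α → β → Prop) :
    completeBipartiteGraph α β \ bipartiteOfRel r = bipartiteOfRel fun a b => ¬ r a b := by
  ext (_ | _) (_ | _) <;> simp

def AvoidsMonochromaticCycle (red : SimpleGraph (α ⊕ β)) (l : ℕ) : Prop :=
  red ≤ completeBipartiteGraph α β ∧ ¬ hasCycleLength red l ∧
    ¬ hasCycleLength (completeBipartiteGraph α β \ red) l

theorem AvoidsMonochromaticCycle.comap {α' β' : Type*} {red : SimpleGraph (α' ⊕ β')} {l : ℕ}
    (h : AvoidsMonochromaticCycle red l) (f : α ↪ α') (g : β ↪ β') :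
    AvoidsMonochromaticCycle (red.comap (Sum.map f g)) l := by
  have hinj : (Sum.map f g).Injective := f.injective.sumMap g.injective
  have hK : ∀ ⦃u v⦄, (completeBipartiteGraph α β).Adj u v →
      (completeBipartiteGraph α' β').Adj (Sum.map f g u) (Sum.map f g v) := by
    rintro (_ | _) (_ | _) <;> simp
  refine ⟨fun u v huv => ?_, fun hc => h.2.1 (hasCycleLength_of_le_comap hinj le_rfl hc),
    fun hc => h.2.2 (hasCycleLength_of_le_comap hinj (fun u v huv => ?_) hc)⟩
  · have := h.1 huv
    rcases u with _ | _ <;> rcases v with _ | _ <;> simp_all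
  · exact ⟨hK huv.1, huv.2⟩

end SimpleGraph

open SimpleGraph

variable {β : Type*}

/-- `none` plays the role of `x` (resp. `y`), and `some (s, i)` that of the `i`-th vertex of
`X₁` or `X₂` (resp. `Y₁` or `Y₂`) according to `s`. -/
def blockColoring (β : Type*) : SimpleGraph (Option (Bool × β) ⊕ Option (Bool × β)) :=
  bipartiteOfRel fun a b => a = none ∨ a.map Prod.fst = b.map Prod.fst

/-- `blockClass false` and `blockClass true` label the pieces of the red graph off `inl none` and
of the blue graph off `inr none`. -/
def blockClass (t : Bool) : Option (Bool × β) ⊕ Option (Bool × β) → Option Bool :=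
  Sum.elim (Option.map fun p => xor t p.1) (Option.map Prod.fst)

theorem isSeparatedBy_blockColoring :
    (blockColoring β).IsSeparatedBy (.inl none) (blockClass false) := by
  rintro (a | a) (b | b) h ha hb <;> simp_all [blockColoring, blockClass]

theorem isSeparatedBy_sdiff_blockColoring :
    (completeBipartiteGraph _ _ \ blockColoring β).IsSeparatedBy (.inr none)
      (blockClass true) := by
  rw [blockColoring, completeBipartiteGraph_sdiff_bipartiteOfRel]
  rintro (a | a) (b | b) h ha hb <;> simp_all [blockClass] <;>
    rcases a with _ | ⟨_ | _, _⟩ <;> rcases b with _ | ⟨_ | _, _⟩ <;> simp_all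

theorem card_blockClass_le [Fintype β] [Nonempty β] (t : Bool) (c : Option Bool) :
    #{x | blockClass (β := β) t x = c} ≤ 2 * Fintype.card β := by
  rw [card_filter]
  simp only [blockClass, Fintype.sum_sum_type, Fintype.sum_option, Fintype.sum_prod_type,
    Fintype.sum_bool, Sum.elim_inl, Sum.elim_inr, Option.map_none, Option.map_some]
  have := Fintype.card_pos (α := β)
  obtain _ | _ | _ := c <;> cases t <;> simp <;> omega

theorem avoidsMonochromaticCycle_blockColoring [Fintype β] [Nonempty β] :
    AvoidsMonochromaticCycle (blockColoring β) (2 * Fintype.card β + 2) := by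
  have hl : ∀ t c, #{x | blockClass (β := β) t x = c} + 1 < 2 * Fintype.card β + 2 :=
    fun t c => by have := card_blockClass_le (β := β) t c; omega
  exact ⟨bipartiteOfRel_le_completeBipartiteGraph _,
    not_hasCycleLength_of_isSeparatedBy isSeparatedBy_blockColoring (hl false),
    not_hasCycleLength_of_isSeparatedBy isSeparatedBy_sdiff_blockColoring (hl true)⟩

/-- For `m ≥ 2` there is a red/blue coloring of `K_{2m-1, 2m-1}` with no
monochromatic `C_{2m}`; hence `br(C_{2m}, C_{2m}) ≥ 2m`. -/
theorem bipartite_ramsey_cycles_lower_diag (m : ℕ) (hm : 2 ≤ m) :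
    (∃ red : SimpleGraph (Fin (2 * m - 1) ⊕ Fin (2 * m - 1)),
      red ≤ completeBipartiteGraph (Fin (2 * m - 1)) (Fin (2 * m - 1)) ∧
      ¬ hasCycleLength red (2 * m) ∧
      ¬ hasCycleLength
          (completeBipartiteGraph (Fin (2 * m - 1)) (Fin (2 * m - 1)) \ red) (2 * m)) ∧
    (∀ N : ℕ,
      (∀ red : SimpleGraph (Fin N ⊕ Fin N),
        red ≤ completeBipartiteGraph (Fin N) (Fin N) →
          hasCycleLength red (2 * m) ∨
          hasCycleLength (completeBipartiteGraph (Fin N) (Fin N) \ red) (2 * m)) →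
      2 * m ≤ N) := by
  have : Nonempty (Fin (m - 1)) := ⟨⟨0, by omega⟩⟩
  have hblock := avoidsMonochromaticCycle_blockColoring (β := Fin (m - 1))
  rw [Fintype.card_fin, show 2 * (m - 1) + 2 = 2 * m by omega] at hblock
  have hsmall : ∀ N ≤ 2 * m - 1,
      ∃ red : SimpleGraph (Fin N ⊕ Fin N), AvoidsMonochromaticCycle red (2 * m) := by
    intro N hN
    obtain ⟨f⟩ := Function.Embedding.nonempty_of_card_le
      (α := Fin N) (β := Option (Bool × Fin (m - 1))) (by simp; omega)
    exact ⟨_, hblock.comap f f⟩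
  refine ⟨hsmall _ le_rfl, fun N hN => ?_⟩
  by_contra! hlt
  obtain ⟨red, hle, hred, hblue⟩ := hsmall N (by omega)
  exact (hN red hle).elim hred hblue
end

section
/- Let A_1, B_1, A_2, B_2 be pairwise disjoint vertex sets in a graph G such that (A_1, B_1) and (A_2, B_2) are complete bipartite subgraphs of G. If G contains an edge between A_1 and A_2 and an edge between B_1 and B_2, then G contains cycles of every even length from 6 to 2(min{|A_1|,|B_1|} + min{|A_2|,|B_2|}). -/
/-!
Zigzagging between the two sides of a complete bipartite pair `(A, B)` gives paths of every odd
length `2j + 1` with `j < min |A| |B|` between any two prescribed endpoints `a ∈ A`, `b ∈ B`.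
Take such a path from `A₂` to `B₂` and one from `B₁` to `A₁`; the edges between `B₂` and `B₁` and
between `A₁` and `A₂` close them into a cycle of length `2(j₁ + j₂) + 4`.
-/

open Finset

namespace SimpleGraph

variable {V : Type*} {G : SimpleGraph V}

theorem disjoint_of_forall_adj {A B : Finset V} (hAB : ∀ a ∈ A, ∀ b ∈ B, G.Adj a b) :
    Disjoint A B :=
  Finset.disjoint_left.2 fun x hA hB => G.irrefl (hAB x hA x hB)

theorem exists_isPath_length_eq_of_forall_adj [DecidableEq V] {A B : Finset V}
    (hAB : ∀ a ∈ A, ∀ b ∈ B, G.Adj a b) {k : ℕ} (hA : k < #A) (hB : k < #B)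
    {a b : V} (ha : a ∈ A) (hb : b ∈ B) :
    ∃ p : G.Walk a b, p.IsPath ∧ p.length = 2 * k + 1 ∧ ∀ v ∈ p.support, v ∈ A ∪ B := by
  induction k generalizing A B a b with
  | zero =>
    have hab := hAB a ha b hb
    exact ⟨.cons hab .nil, by simp [hab.ne], rfl, by simp [ha, hb]⟩
  | succ k ih =>
    obtain ⟨b', hb'B, hb'b⟩ := exists_mem_ne (by omega : 1 < #B) b
    obtain ⟨a', ha'A, ha'a⟩ := exists_mem_ne (by omega : 1 < #A) a
    obtain ⟨p, hp, hlen, hsupp⟩ := ih (A := A.erase a) (B := B.erase b')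
      (fun x hx y hy => hAB x (mem_of_mem_erase hx) y (mem_of_mem_erase hy))
      (by rw [card_erase_of_mem ha]; omega) (by rw [card_erase_of_mem hb'B]; omega)
      (mem_erase.2 ⟨ha'a, ha'A⟩) (mem_erase.2 ⟨hb'b.symm, hb⟩)
    have hdisj := Finset.disjoint_left.1 (disjoint_of_forall_adj hAB)
    have hab' := hAB a ha b' hb'B
    have hb'a' := (hAB a' ha'A b' hb'B).symm
    have hb'p : b' ∉ p.support := fun h => by
      have := hsupp b' h
      simp only [mem_union, mem_erase, ne_eq, not_true_eq_false, false_and, or_false] at this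
      exact hdisj this.2 hb'B
    have hap : a ∉ p.support := fun h => by
      have := hsupp a h
      simp only [mem_union, mem_erase, ne_eq, not_true_eq_false, false_and, false_or] at this
      exact hdisj ha this.2
    refine ⟨.cons hab' (.cons hb'a' p), ?_, by simp [hlen]; ring, ?_⟩
    · simp only [Walk.cons_isPath_iff, Walk.support_cons, List.mem_cons, not_or]
      exact ⟨⟨hp, hb'p⟩, hab'.ne, hap⟩
    · intro v hv
      simp only [Walk.support_cons, List.mem_cons] at hv
      rcases hv with rfl | rfl | hv
      · exact mem_union_left _ ha
      · exact mem_union_right _ hb'B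
      · exact union_subset_union (erase_subset _ _) (erase_subset _ _) (hsupp v hv)

namespace Walk

theorem IsPath.isCycle_cons_append_cons {u v x y : V} {p : G.Walk u v} {q : G.Walk x y}
    (hp : p.IsPath) (hq : q.IsPath) (hpq : p.support.Disjoint q.support)
    (hvx : G.Adj v x) (hyu : G.Adj y u) (huv : u ≠ v) :
    (cons hyu (p.append (cons hvx q))).IsCycle := by
  rw [cons_isCycle_iff, isPath_def, support_append, support_cons, List.tail_cons]
  refine ⟨hp.support_nodup.append hq.support_nodup hpq, fun he => ?_⟩
  rw [edges_append, edges_cons, List.mem_append, List.mem_cons] at he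
  rcases he with he | he | he
  · exact hpq (p.fst_mem_support_of_mem_edges he) q.end_mem_support
  · rcases Sym2.eq_iff.1 he with ⟨-, rfl⟩ | ⟨-, rfl⟩
    · exact hpq p.start_mem_support q.start_mem_support
    · exact huv rfl
  · exact hpq p.start_mem_support (q.snd_mem_support_of_mem_edges he)

end Walk

end SimpleGraph

open SimpleGraph

theorem cycles_from_two_complete_bipartite_graphs_general {V : Type*} [DecidableEq V]
    (G : SimpleGraph V) (A1 B1 A2 B2 : Finset V)
    (hA1A2 : Disjoint A1 A2) (hA1B2 : Disjoint A1 B2)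
    (hB1A2 : Disjoint B1 A2) (hB1B2 : Disjoint B1 B2)
    (hcb1 : ∀ a ∈ A1, ∀ b ∈ B1, G.Adj a b)
    (hcb2 : ∀ a ∈ A2, ∀ b ∈ B2, G.Adj a b)
    (heA : ∃ a ∈ A1, ∃ a' ∈ A2, G.Adj a a')
    (heB : ∃ b ∈ B1, ∃ b' ∈ B2, G.Adj b b') :
    ∀ l : ℕ, Even l → 6 ≤ l → l ≤ 2 * (min A1.card B1.card + min A2.card B2.card) →
      hasCycleLength G l := by
  rintro l ⟨k, rfl⟩ hl6 hl
  obtain ⟨a, ha, a', ha', haa'⟩ := heA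
  obtain ⟨b, hb, b', hb', hbb'⟩ := heB
  have hA1 := card_pos.2 ⟨a, ha⟩
  have hB1 := card_pos.2 ⟨b, hb⟩
  have hA2 := card_pos.2 ⟨a', ha'⟩
  have hB2 := card_pos.2 ⟨b', hb'⟩
  obtain ⟨j₁, j₂, hj₁, hj₂, hk⟩ : ∃ j₁ j₂, j₁ < min #A1 #B1 ∧ j₂ < min #A2 #B2 ∧ k = j₁ + j₂ + 2 :=
    ⟨min (k - 2) (min #A1 #B1 - 1), k - 2 - min (k - 2) (min #A1 #B1 - 1), by omega, by omega,
      by omega⟩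
  obtain ⟨p₁, hp₁, hlen₁, hsupp₁⟩ := exists_isPath_length_eq_of_forall_adj
    (fun x hx y hy => (hcb1 y hy x hx).symm) (lt_min_iff.1 hj₁).2 (lt_min_iff.1 hj₁).1 hb ha
  obtain ⟨p₂, hp₂, hlen₂, hsupp₂⟩ := exists_isPath_length_eq_of_forall_adj
    hcb2 (lt_min_iff.1 hj₂).1 (lt_min_iff.1 hj₂).2 ha' hb'
  have hsides : Disjoint (A2 ∪ B2) (B1 ∪ A1) :=
    disjoint_union_left.2 ⟨disjoint_union_right.2 ⟨hB1A2.symm, hA1A2.symm⟩,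
      disjoint_union_right.2 ⟨hB1B2.symm, hA1B2.symm⟩⟩
  have hpp : p₂.support.Disjoint p₁.support := fun v h₂ h₁ =>
    Finset.disjoint_left.1 hsides (hsupp₂ v h₂) (hsupp₁ v h₁)
  refine ⟨a, _, hp₂.isCycle_cons_append_cons hp₁ hpp hbb'.symm haa' (hcb2 a' ha' b' hb').ne, ?_⟩
  simp only [Walk.length_cons, Walk.length_append, hlen₁, hlen₂]
  omega

/-- If `(A₁, B₁)` and `(A₂, B₂)` are complete bipartite subgraphs of `G` on pairwise
disjoint vertex sets, and there is an edge between `A₁` and `A₂` and an edge between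
`B₁` and `B₂`, then `G` contains cycles of every even length from `6` to
`2(min(|A₁|,|B₁|) + min(|A₂|,|B₂|))`. -/
theorem cycles_from_two_complete_bipartite_graphs {V : Type*} [DecidableEq V]
    (G : SimpleGraph V) (A1 B1 A2 B2 : Finset V)
    (hA1B1 : Disjoint A1 B1) (hA1A2 : Disjoint A1 A2) (hA1B2 : Disjoint A1 B2)
    (hB1A2 : Disjoint B1 A2) (hB1B2 : Disjoint B1 B2) (hA2B2 : Disjoint A2 B2)
    (hcb1 : ∀ a ∈ A1, ∀ b ∈ B1, G.Adj a b)
    (hcb2 : ∀ a ∈ A2, ∀ b ∈ B2, G.Adj a b)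
    (heA : ∃ a ∈ A1, ∃ a' ∈ A2, G.Adj a a')
    (heB : ∃ b ∈ B1, ∃ b' ∈ B2, G.Adj b b') :
    ∀ l : ℕ, Even l → 6 ≤ l → l ≤ 2 * (min A1.card B1.card + min A2.card B2.card) →
      hasCycleLength G l :=
  cycles_from_two_complete_bipartite_graphs_general G A1 B1 A2 B2 hA1A2 hA1B2 hB1A2 hB1B2 hcb1 hcb2
    heA heB
end

section
/- Let G be a bipartite graph with parts X, Y where |X| = |Y| ≥ n ≥ 4. If every vertex y ∈ Y satisfies deg(y) ≥ |X| − 1 and G contains no cycle C_{2n}, then G contains a complete bipartite subgraph K_{n−1, n−1}. -/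
/-!
Each `y` misses at most one vertex of the other side. If some `x` is missed by `n - 1` vertices,
these together with any `n - 1` vertices other than `x` span a `K_{n-1,n-1}`. Otherwise every `x`
is missed at most `n - 2` times. Take `n` vertices `y₀, …, y_{n-1}` sorted by the vertex they miss,
so that equal misses form consecutive blocks of length at most `n - 2`, and look for distinct
`x_p` adjacent to `y_p` and `y_{p+1}` (indices mod `n`), which closes a `2n`-cycle. The vertex
missed by a block ending at `y_q` can serve as `x_{q+1}`, since `y_{q+1}` and `y_{q+2}` lie outside
that block; the remaining `x_p` are chosen among the vertices missed by none of the `y_p`.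
-/

open Finset Function SimpleGraph

theorem Fin.val_add_one_eq_ite {n : ℕ} [NeZero n] (i : Fin n) :
    ((i + 1 : Fin n) : ℕ) = if (i : ℕ) + 1 = n then 0 else (i : ℕ) + 1 := by
  rw [Fin.val_add_eq_ite, Fin.val_one']
  rcases Nat.lt_or_ge 1 n with h | h
  · rw [Nat.mod_eq_of_lt h]
    split_ifs <;> omega
  · obtain rfl : n = 1 := by have := i.isLt; omega
    simp

theorem Finset.min_eq_coe_iff_of_card_le_one {α : Type*} [LinearOrder α] {s : Finset α}
    (hs : #s ≤ 1) {a : α} : s.min = a ↔ a ∈ s := by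
  refine ⟨mem_of_min, fun ha => ?_⟩
  rw [eq_singleton_iff_unique_mem.2 ⟨ha, fun b hb => card_le_one.1 hs b hb a ha⟩, min_singleton]

namespace SimpleGraph

variable {V : Type*} {G : SimpleGraph V}

theorem cycleGraph_isContained_of_adj_add_one {N : ℕ} [NeZero N] {v : Fin N → V}
    (hv : Injective v) (hadj : ∀ i, G.Adj (v i) (v (i + 1))) : cycleGraph N ⊑ G := by
  refine ⟨⟨⟨v, fun {i j} hij => ?_⟩, hv⟩⟩
  have hsucc : ∀ {i j : Fin N}, (i - j : Fin N).val = 1 → i = j + 1 := fun {i j} h => by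
    rw [← sub_eq_iff_eq_add', Fin.ext_iff, h, Fin.val_one', Nat.mod_eq_of_lt]
    exact h ▸ (i - j).isLt
  rcases cycleGraph_adj'.mp hij with h | h
  · exact hsucc h ▸ (hadj j).symm
  · exact hsucc h ▸ hadj i

theorem cycleGraph_two_mul_isContained {n : ℕ} [NeZero n] {u w : Fin n → V}
    (hu : Injective u) (hw : Injective w) (huw : ∀ i j, u i ≠ w j)
    (hadj : ∀ i, G.Adj (u i) (w i)) (hadj' : ∀ i, G.Adj (w i) (u (i + 1))) :
    cycleGraph (2 * n) ⊑ G := by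
  let v : Fin (2 * n) → V := fun j =>
    if (j : ℕ) % 2 = 0 then u ⟨j / 2, by omega⟩ else w ⟨j / 2, by omega⟩
  refine cycleGraph_isContained_of_adj_add_one (v := v) (fun i j hij => ?_) fun j => ?_
  · simp only [v] at hij
    split_ifs at hij
    · have := congrArg Fin.val (hu hij)
      ext; dsimp only at this; omega
    · exact absurd hij (huw _ _)
    · exact absurd hij.symm (huw _ _)
    · have := congrArg Fin.val (hw hij)
      ext; dsimp only at this; omega
  · have hj : (j : ℕ) / 2 < n := by omega
    simp only [v, Fin.val_add_one_eq_ite j]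
    split_ifs <;> first | omega | skip
    · convert hadj ⟨j / 2, hj⟩ using 3
      omega
    all_goals
      convert hadj' ⟨j / 2, hj⟩ using 3
      rw [Fin.val_add_one_eq_ite]
      dsimp only
      split_ifs <;> omega

end SimpleGraph

section BlockEnds

variable {α : Type*} [DecidableEq α] {n : ℕ} {k : Fin n → WithTop α}

theorem Monotone.card_Icc_le_of_eq [PartialOrder α] (hk : Monotone k)
    (hfiber : ∀ a : α, #{p | k p = a} ≤ n - 2) {i j : Fin n} (h : k i = k j) (hi : k i ≠ ⊤) :
    #(Icc i j) ≤ n - 2 := by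
  obtain ⟨a, ha⟩ := WithTop.ne_top_iff_exists.mp hi
  refine (card_le_card fun p hp => ?_).trans (hfiber a)
  rw [mem_Icc] at hp
  rw [mem_filter, ha]
  exact ⟨mem_univ p, le_antisymm (h ▸ hk hp.2) (hk hp.1)⟩

variable [NeZero n]

def blockEnds (k : Fin n → WithTop α) : Finset (Fin n) := {p | k p ≠ ⊤ ∧ k p ≠ k (p + 1)}

@[simp]
theorem mem_blockEnds {p : Fin n} : p ∈ blockEnds k ↔ k p ≠ ⊤ ∧ k p ≠ k (p + 1) := by
  simp [blockEnds]

variable [PartialOrder α]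

theorem Monotone.injOn_blockEnds (hk : Monotone k) : Set.InjOn k (blockEnds k) := by
  intro p hp q hq hpq
  by_contra hne
  wlog hlt : p < q generalizing p q
  · exact this hq hp hpq.symm (Ne.symm hne) (lt_of_le_of_ne (not_lt.1 hlt) (Ne.symm hne))
  have hval := Fin.val_add_one_eq_ite p
  have hp1 : p ≤ p + 1 := by rw [Fin.le_def, hval]; split_ifs <;> omega
  have hp1q : p + 1 ≤ q := by rw [Fin.le_def, hval]; split_ifs <;> omega
  exact (mem_blockEnds.1 hp).2 (le_antisymm (hk hp1) (hpq ▸ hk hp1q))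

theorem Monotone.exists_mem_blockEnds (hk : Monotone k)
    (hfiber : ∀ a : α, #{p | k p = a} ≤ n - 2) {p : Fin n} (hp : k p ≠ ⊤) :
    ∃ q ∈ blockEnds k, k q = k p := by
  obtain ⟨q, hq, hmax⟩ := exists_max_image {r | k r = k p} id ⟨p, by simp⟩
  rw [mem_filter] at hq
  refine ⟨q, mem_blockEnds.2 ⟨hq.2 ▸ hp, fun h => ?_⟩, hq.2⟩
  have hval := Fin.val_add_one_eq_ite q
  split_ifs at hval
  · have hq0 : q + 1 = 0 := Fin.ext hval
    have := hk.card_Icc_le_of_eq hfiber (i := 0) (j := q) (by rw [h, hq0])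
      (by rw [← hq0, ← h, hq.2]; exact hp)
    rw [Fin.card_Icc, Fin.val_zero] at this
    omega
  · have := hmax (q + 1) (by simp [← h, hq.2])
    rw [id, id, Fin.le_def, hval] at this
    omega

theorem Monotone.apply_add_one_add_one_ne_of_mem_blockEnds (hk : Monotone k)
    (hfiber : ∀ a : α, #{p | k p = a} ≤ n - 2) {p : Fin n} (hp : p ∈ blockEnds k) :
    k (p + 1 + 1) ≠ k p := by
  intro h
  rw [mem_blockEnds] at hp
  have h1 := Fin.val_add_one_eq_ite p
  have h2 := Fin.val_add_one_eq_ite (p + 1)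
  by_cases hwrap : (p : ℕ) + 2 < n
  · have hle1 : p ≤ p + 1 := by rw [Fin.le_def, h1]; split_ifs <;> omega
    have hle2 : p + 1 ≤ p + 1 + 1 := by rw [Fin.le_def, h2, h1]; split_ifs <;> omega
    exact hp.2 (le_antisymm (hk hle1) (h ▸ hk hle2))
  · have := hk.card_Icc_le_of_eq hfiber h (h ▸ hp.1)
    rw [Fin.card_Icc, h2, h1] at this
    split_ifs at this <;> omega

theorem Monotone.exists_injective_forall_ne [Fintype α] (hk : Monotone k)
    (hfiber : ∀ a : α, #{p | k p = a} ≤ n - 2) (hn : n ≤ Fintype.card α) :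
    ∃ x : Fin n → α, Injective x ∧ ∀ p, ↑(x p) ≠ k p ∧ ↑(x p) ≠ k (p + 1) := by
  have : Nonempty α := Fintype.card_pos_iff.mp ((NeZero.pos n).trans_le hn)
  let f : Fin n → α := fun p => (k p).untopA
  have hf : ∀ p ∈ blockEnds k, (f p : WithTop α) = k p := fun p hp => by
    obtain ⟨a, ha⟩ := WithTop.ne_top_iff_exists.mp (mem_blockEnds.1 hp).1
    simp [f, ← ha]
  have hf_inj : Set.InjOn f (blockEnds k) := fun p hp q hq hpq =>
    hk.injOn_blockEnds hp hq (by rw [← hf p hp, ← hf q hq, hpq])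
  obtain ⟨t, hft, -, ht⟩ := exists_subsuperset_card_eq (subset_univ ((blockEnds k).image f))
    (card_image_le.trans ((card_le_univ _).trans_eq (Fintype.card_fin n))) (by simpa using hn)
  obtain ⟨g, hg⟩ := exists_equiv_extend_of_card_eq (by simp [ht]) hft hf_inj
  have hg_label : ∀ p q, (g p : WithTop α) = k q → p ∈ blockEnds k := by
    intro p q hpq
    obtain ⟨r, hr, hrq⟩ := hk.exists_mem_blockEnds hfiber (p := q) (hpq ▸ WithTop.coe_ne_top)
    have : g r = g p := Subtype.ext (WithTop.coe_injective (by rw [hg r hr, hf r hr, hrq, hpq]))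
    exact g.injective this ▸ hr
  refine ⟨fun p => g (p - 1), Subtype.val_injective.comp (g.injective.comp sub_left_injective),
    fun p => ?_⟩
  obtain ⟨q, rfl⟩ : ∃ q, p = q + 1 := ⟨p - 1, (sub_add_cancel p 1).symm⟩
  simp only [add_sub_cancel_right]
  constructor <;> intro h <;> have hq := hg_label _ _ h <;> rw [hg q hq, hf q hq] at h
  · exact (mem_blockEnds.1 hq).2 h
  · exact hk.apply_add_one_add_one_ne_of_mem_blockEnds hfiber hq h.symm

end BlockEnds

section Bipartite

variable {α β : Type*} [Fintype α] {G : SimpleGraph (α ⊕ β)} [DecidableRel G.Adj]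

theorem card_filter_not_adj_le_one (hG : G ≤ completeBipartiteGraph α β) {y : β}
    (hy : Fintype.card α - 1 ≤ (G.neighborSet (.inr y)).ncard) :
    #{x | ¬G.Adj (.inl x) (.inr y)} ≤ 1 := by
  have hnbr : G.neighborSet (.inr y) = Sum.inl '' ↑({x | G.Adj (.inl x) (.inr y)} : Finset α) := by
    ext (x | y')
    · simp [adj_comm]
    · simpa using fun h => by simpa using hG h
  rw [hnbr, Set.ncard_image_of_injective _ Sum.inl_injective, Set.ncard_coe_finset] at hy
  have := card_filter_add_card_filter_not (s := univ) fun x => G.Adj (.inl x) (.inr y)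
  rw [card_univ] at this
  omega

theorem exists_biclique_of_le_card_filter_not_adj [Fintype β] [DecidableEq α]
    (hmiss : ∀ y, #{x | ¬G.Adj (.inl x) (.inr y)} ≤ 1) {x₀ : α} {m : ℕ}
    (hm : m ≤ Fintype.card α - 1) (hx₀ : m ≤ #{y | ¬G.Adj (.inl x₀) (.inr y)}) :
    ∃ S : Finset α, ∃ T : Finset β, #S = m ∧ #T = m ∧ ∀ a ∈ S, ∀ b ∈ T, G.Adj (.inl a) (.inr b) := by
  obtain ⟨T, hT, hTm⟩ := exists_subset_card_eq hx₀
  obtain ⟨S, hS, hSm⟩ := exists_subset_card_eq (s := univ.erase x₀) (by simpa using hm)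
  refine ⟨S, T, hSm, hTm, fun a ha b hb => by_contra fun hab => ?_⟩
  have hx₀b : ¬G.Adj (.inl x₀) (.inr b) := (mem_filter.1 (hT hb)).2
  exact (mem_erase.1 (hS ha)).1 <| card_le_one.1 (hmiss b) a (mem_filter.2 ⟨mem_univ a, hab⟩)
    x₀ (mem_filter.2 ⟨mem_univ x₀, hx₀b⟩)

theorem hasCycleLength_two_mul_of_card_filter_not_adj_le [LinearOrder α] [Fintype β] {n : ℕ}
    (hn : 2 ≤ n) (hα : n ≤ Fintype.card α) (hβ : n ≤ Fintype.card β)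
    (hmiss : ∀ y, #{x | ¬G.Adj (.inl x) (.inr y)} ≤ 1)
    (hfew : ∀ x, #{y | ¬G.Adj (.inl x) (.inr y)} ≤ n - 2) :
    hasCycleLength G (2 * n) := by
  have : NeZero n := ⟨by omega⟩
  obtain ⟨e⟩ := Embedding.nonempty_of_card_le (α := Fin n) (β := β) (by simpa using hβ)
  let miss : β → WithTop α := fun y => ({x | ¬G.Adj (.inl x) (.inr y)} : Finset α).min
  have hmiss_iff : ∀ (x : α) y, miss y = x ↔ ¬G.Adj (.inl x) (.inr y) := fun x y =>
    (min_eq_coe_iff_of_card_le_one (hmiss y)).trans (by simp)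
  let Y : Fin n → β := e ∘ Tuple.sort (miss ∘ e)
  have hY : Injective Y := e.injective.comp (Equiv.injective _)
  have hfiber : ∀ x : α, #{p | miss (Y p) = x} ≤ n - 2 := fun x =>
    (card_le_card_of_injOn Y (fun p hp => by simpa [hmiss_iff] using hp) hY.injOn).trans (hfew x)
  obtain ⟨X, hX, hXY⟩ := (Tuple.monotone_sort (miss ∘ e)).exists_injective_forall_ne hfiber hα
  have hadj : ∀ p q, (X p : WithTop α) ≠ miss (Y q) → G.Adj (.inr (Y q)) (.inl (X p)) :=
    fun p q h => G.adj_symm (not_not.1 fun h' => h ((hmiss_iff _ _).2 h').symm)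
  exact (cycleGraph_isContained_iff (by omega)).1 <| cycleGraph_two_mul_isContained
    (u := Sum.inr ∘ Y) (w := Sum.inl ∘ X) (Sum.inr_injective.comp hY)
    (Sum.inl_injective.comp hX) (fun _ _ => Sum.inr_ne_inl) (fun p => hadj p p (hXY p).1)
    (fun p => G.adj_symm (hadj p (p + 1) (hXY p).2))

end Bipartite

/-- Let `G` be bipartite with parts of equal size `M ≥ n ≥ 4`. If every vertex `y` of
the second part has degree at least `M - 1` and `G` has no `C_{2n}`, then `G` contains
a complete bipartite `K_{n-1, n-1}`. -/
theorem Knn_from_high_degree (M n : ℕ) (hn : 4 ≤ n) (hMn : n ≤ M)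
    (G : SimpleGraph (Fin M ⊕ Fin M))
    (hG : G ≤ completeBipartiteGraph (Fin M) (Fin M))
    (hdeg : ∀ y : Fin M, M - 1 ≤ (G.neighborSet (Sum.inr y)).ncard)
    (hno : ¬ hasCycleLength G (2 * n)) :
    ∃ (S T : Finset (Fin M)), S.card = n - 1 ∧ T.card = n - 1 ∧
      ∀ a ∈ S, ∀ b ∈ T, G.Adj (Sum.inl a) (Sum.inr b) := by
  classical
  have hmiss : ∀ y, #{x | ¬G.Adj (.inl x) (.inr y)} ≤ 1 := fun y =>
    card_filter_not_adj_le_one hG (by simpa using hdeg y)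
  by_cases hbig : ∃ x, n - 1 ≤ #{y | ¬G.Adj (.inl x) (.inr y)}
  · obtain ⟨x₀, hx₀⟩ := hbig
    exact exists_biclique_of_le_card_filter_not_adj hmiss (by simp; omega) hx₀
  · push Not at hbig
    refine absurd (hasCycleLength_two_mul_of_card_filter_not_adj_le (by omega) (by simpa)
      (by simpa) hmiss fun x => ?_) hno
    have := hbig x
    omega
end

section
/- (Moon–Moser) Let G be a bipartite graph with parts X, Y, |X| = |Y| = n ≥ 4. If deg(x) + deg(y) ≥ n+1 for every pair of nonadjacent vertices x ∈ X, y ∈ Y, then G has a Hamiltonian cycle. -/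
/-!
Bondy–Chvátal closure, bipartite version. Adding an edge `xy` between nonadjacent `x ∈ X`,
`y ∈ Y` preserves the degree condition, so by induction on the number of missing `X`–`Y` edges
(the base case being `K_{n,n}`) it suffices to show: if `G + xy` is Hamiltonian, so is `G`.
A Hamiltonian cycle of `G + xy` using `xy` gives a Hamiltonian path `x = p₀, …, p_{2n-1} = y`
of `G`. The neighbours of `y` and the predecessors of the neighbours of `x` all lie in `X`,
which has `n` vertices, so `deg x + deg y ≥ n + 1` yields `j` with `p_j ~ y` and `x ~ p_{j+1}`,
and then `p₀ … p_j p_{2n-1} p_{2n-2} … p_{j+1} p₀` is a Hamiltonian cycle of `G`.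
-/

namespace SimpleGraph

variable {V : Type*} (G : SimpleGraph V)

/- Hamiltonian paths and cycles are encoded by the list of their vertices; a cycle list does not
repeat its first vertex. -/
structure IsHamiltonianPathList (l : List V) : Prop where
  nodup : l.Nodup
  mem : ∀ v, v ∈ l
  chain : l.IsChain G.Adj

structure IsHamiltonianCycleList (l : List V) : Prop where
  nodup : l.Nodup
  mem : ∀ v, v ∈ l
  chain : Cycle.Chain G.Adj l

variable {G}

theorem IsHamiltonianCycleList.exists_cons {l : List V} (h : G.IsHamiltonianCycleList l) (x : V) :
    ∃ t, G.IsHamiltonianCycleList (x :: t) := by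
  obtain ⟨s, t, rfl⟩ := List.append_of_mem (h.mem x)
  have hperm : (s ++ x :: t).Perm (x :: t ++ s) := List.perm_append_comm
  refine ⟨t ++ s, hperm.nodup_iff.1 h.nodup, fun v => hperm.mem_iff.1 (h.mem v), ?_⟩
  rw [← List.cons_append, ← Cycle.coe_eq_coe.2 List.isRotated_append]
  exact h.chain

theorem IsHamiltonianCycleList.length_eq [Fintype V] {l : List V} (h : G.IsHamiltonianCycleList l) :
    l.length = Fintype.card V := by
  classical
  have : l.toFinset = Finset.univ := Finset.eq_univ_of_forall fun v => by simpa using h.mem v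
  rw [← List.toFinset_card_of_nodup h.nodup, this, Finset.card_univ]

theorem IsHamiltonianCycleList.exists_isHamiltonianCycle [Fintype V] [DecidableEq V] {l : List V}
    (h : G.IsHamiltonianCycleList l) (h3 : 3 ≤ Fintype.card V) :
    ∃ v, ∃ p : G.Walk v v, p.IsHamiltonianCycle := by
  obtain _ | ⟨x, t⟩ := l
  · simp [← h.length_eq] at h3
  have hchain : (x :: (t ++ [x])).IsChain G.Adj := h.chain
  obtain ⟨p, hp⟩ : ∃ p : G.Walk x x, p.support = x :: (t ++ [x]) :=
    ⟨(Walk.ofSupport _ (List.cons_ne_nil _ _) hchain).copy (by simp) (by simp),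
      (Walk.support_copy _ _ _).trans (Walk.support_ofSupport _ _)⟩
  have hlen : p.length = Fintype.card V := by
    rw [← h.length_eq, ← Nat.add_right_cancel_iff, ← Walk.length_support, hp]; simp
  have hsupp : p.tail.support = t ++ [x] := by
    rw [Walk.support_tail_of_not_nil _ (Walk.not_nil_iff_lt_length.2 (by omega)), hp,
      List.tail_cons]
  refine ⟨x, p, ?_⟩
  rw [Walk.isHamiltonianCycle_iff_isCycle_and_length_eq, Walk.isCycle_iff_isPath_tail_and_le_length,
    Walk.isPath_def, hsupp, hlen]
  exact ⟨⟨List.nodup_append_comm.2 h.nodup, h3⟩, rfl⟩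

theorem ncard_neighborSet_le_of_le [Finite V] {H : SimpleGraph V} (h : G ≤ H) (v : V) :
    (G.neighborSet v).ncard ≤ (H.neighborSet v).ncard :=
  Set.ncard_le_ncard fun _ hw => h hw

theorem adj_of_sup_edge_adj {x y a b : V} (h : (G ⊔ edge x y).Adj a b)
    (hab : ¬(a = x ∧ b = y ∨ a = y ∧ b = x)) : G.Adj a b :=
  h.resolve_right fun h' => hab ((edge_adj _ _ _ _).1 h').1

theorem IsHamiltonianCycleList.exists_cycle_or_path_of_sup_edge [Fintype V] {x y : V}
    {l : List V} (h : (G ⊔ edge x y).IsHamiltonianCycleList l) (h3 : 3 ≤ Fintype.card V) :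
    (∃ c, G.IsHamiltonianCycleList c) ∨ ∃ t, G.IsHamiltonianPathList (x :: t ++ [y]) := by
  -- Once the cycle starts at `x`, the new edge can only be its first or its last edge.
  obtain ⟨t, ht⟩ := h.exists_cons x
  have hlen : 3 ≤ (x :: t).length := ht.length_eq ▸ h3
  obtain _ | ⟨a, t⟩ := t
  · simp at hlen
  obtain rfl | ⟨u, b, rfl⟩ := t.eq_nil_or_concat'
  · simp at hlen
  have hchain : ((x :: a :: u) ++ b :: x :: []).IsChain (G ⊔ edge x y).Adj := by
    simpa using ht.chain
  rw [List.isChain_append_cons_cons] at hchain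
  obtain ⟨hxab, hbx', -⟩ := hchain
  rw [List.cons_append, List.cons_append, List.isChain_cons_cons] at hxab
  obtain ⟨hxa', hinner'⟩ := hxab
  obtain ⟨hx, hnodup⟩ := List.nodup_cons.1 ht.nodup
  have hne_xa : x ≠ a := fun h => hx (by simp [h])
  have hne_xb : x ≠ b := fun h => hx (by simp [h])
  have hne_ab : a ≠ b := by
    rintro rfl; simp at hnodup
  have hinner : (a :: (u ++ [b])).IsChain G.Adj :=
    hinner'.imp_of_mem_imp fun p q hp hq hpq =>
      adj_of_sup_edge_adj hpq (by rintro (⟨rfl, -⟩ | ⟨-, rfl⟩) <;> contradiction)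
  by_cases hay : a = y
  · subst hay
    have hperm : (x :: (b :: u.reverse) ++ [a]).Perm (x :: a :: (u ++ [b])) := by
      simpa using (List.reverse_perm (a :: (u ++ [b]))).cons x
    have hbx : G.Adj b x := adj_of_sup_edge_adj hbx' (by tauto)
    have hrev : (a :: (u ++ [b])).reverse.IsChain G.Adj :=
      List.isChain_reverse.2 (hinner.imp fun _ _ h => h.symm)
    right
    refine ⟨b :: u.reverse, hperm.nodup_iff.2 ht.nodup, fun v => hperm.mem_iff.2 (ht.mem v), ?_⟩
    simpa [List.isChain_cons_cons, hbx.symm] using hrev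
  have hxa : G.Adj x a := adj_of_sup_edge_adj hxa' (by tauto)
  by_cases hby : b = y
  · subst hby
    right
    refine ⟨a :: u, by simpa using ht.nodup, by simpa using ht.mem, ?_⟩
    simpa [List.isChain_cons_cons, hxa] using hinner
  have hbx : G.Adj b x := adj_of_sup_edge_adj hbx' (by tauto)
  left
  refine ⟨x :: a :: (u ++ [b]), ht.nodup, ht.mem, ?_⟩
  simpa [List.isChain_cons_cons, hxa, hbx] using hinner

theorem IsHamiltonianPathList.isHamiltonianCycleList_of_crossing {x y v w : V} {A B : List V}
    (h : G.IsHamiltonianPathList (x :: A ++ v :: w :: B ++ [y])) (hvy : G.Adj v y)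
    (hxw : G.Adj x w) : G.IsHamiltonianCycleList (x :: A ++ v :: y :: B.reverse ++ [w]) := by
  have hperm : (x :: A ++ v :: y :: B.reverse ++ [w]).Perm (x :: A ++ v :: w :: B ++ [y]) := by
    simpa using ((List.reverse_perm (w :: B ++ [y])).cons v).append_left (x :: A)
  refine ⟨hperm.nodup_iff.2 h.nodup, fun u => hperm.mem_iff.2 (h.mem u), ?_⟩
  obtain ⟨hxv, -, hwy⟩ : (x :: (A ++ [v])).IsChain G.Adj ∧ G.Adj v w ∧
      (w :: (B ++ [y])).IsChain G.Adj := by simpa using h.chain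
  have hyw : (y :: B.reverse ++ [w]).IsChain G.Adj := by
    simpa using List.isChain_reverse.2 (hwy.imp fun _ _ h => h.symm)
  rw [List.cons_append, List.cons_append, Cycle.chain_coe_cons]
  simp only [List.append_assoc, List.cons_append, List.isChain_cons_append_cons_cons]
  refine ⟨hxv, hvy, ?_⟩
  simpa using List.isChain_append_cons_cons.2 ⟨hyw, hxw.symm, .singleton x⟩

section Bipartite

variable {α β : Type*} {G : SimpleGraph (α ⊕ β)}

theorem isLeft_ne_of_adj (hG : G ≤ completeBipartiteGraph α β) {a b : α ⊕ β}
    (h : G.Adj a b) : a.isLeft ≠ b.isLeft := by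
  have := hG h
  rcases a with a | a <;> rcases b with b | b <;> simp_all

theorem IsHamiltonianPathList.exists_crossing (hG : G ≤ completeBipartiteGraph α β)
    {x : α} {y : β} {l : List (α ⊕ β)} (hP : G.IsHamiltonianPathList (.inl x :: l))
    (hdeg : Nat.card α < (G.neighborSet (.inl x)).ncard + (G.neighborSet (.inr y)).ncard) :
    ∃ L₁ v w L₂, Sum.inl x :: l = L₁ ++ v :: w :: L₂ ∧ G.Adj v (.inr y) ∧ G.Adj (.inl x) w := by
  -- Under `classical`, `idxOf` would use the componentwise `BEq` of `α ⊕ β`,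
  -- which is not known to be lawful.
  let := Classical.decEq (α ⊕ β)
  set P := Sum.inl x :: l with hPdef
  have hmem : ∀ v, v ∈ P := hP.mem
  have hinj : Set.InjOn P.idxOf Set.univ := fun v _ w _ h => (List.idxOf_inj (hmem v)).1 h
  -- Positions in `P` of the left vertices, of the neighbours of `y`, and of the predecessors
  -- of the neighbours of `x`.
  set S := P.idxOf '' Set.range Sum.inl
  set A := P.idxOf '' G.neighborSet (.inr y)
  set B := (P.idxOf · - 1) '' G.neighborSet (.inl x)
  have hS : S.ncard = Nat.card α := by
    rw [(hinj.mono (Set.subset_univ _)).ncard_image, Set.ncard_range_of_injective Sum.inl_injective]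
  have hSfin : S.Finite := (Set.finite_Iio P.length).subset <| by
    rintro _ ⟨v, -, rfl⟩; exact List.idxOf_lt_length_of_mem (hmem v)
  have hA : A.ncard = (G.neighborSet (.inr y)).ncard := (hinj.mono (Set.subset_univ _)).ncard_image
  have hpos : ∀ w ∈ G.neighborSet (.inl x), P.idxOf w ≠ 0 := by
    intro w hw
    simp [hPdef, G.ne_of_adj hw]
  have hB : B.ncard = (G.neighborSet (.inl x)).ncard := by
    refine Set.InjOn.ncard_image fun v hv w hw h => hinj trivial trivial ?_
    have := hpos v hv; have := hpos w hw; beta_reduce at *; omega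
  have hAS : A ⊆ S := by
    rintro _ ⟨v, hv, rfl⟩
    have := isLeft_ne_of_adj hG hv
    obtain ⟨a, rfl⟩ := Sum.isLeft_iff.1 (by simpa using this.symm)
    exact Set.mem_image_of_mem _ ⟨a, rfl⟩
  have hBS : B ⊆ S := by
    rintro _ ⟨w, hw, rfl⟩
    obtain ⟨j, hj⟩ := Nat.exists_eq_add_one_of_ne_zero (hpos w hw)
    have hlt := List.idxOf_lt_length_of_mem (hmem w)
    have hadj := List.isChain_iff_getElem.1 hP.chain j (by omega)
    simp only [← hj, List.getElem_idxOf] at hadj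
    have h₁ := isLeft_ne_of_adj hG hadj
    have h₂ := isLeft_ne_of_adj hG hw
    have hleft : P[j].isLeft := by cases h : w.isLeft <;> simp_all
    obtain ⟨a, ha⟩ := Sum.isLeft_iff.1 hleft
    refine ⟨_, ⟨a, ha.symm⟩, ?_⟩
    beta_reduce
    rw [hj, hP.nodup.idxOf_getElem]
    rfl
  obtain ⟨k, ⟨v, hv, rfl⟩, ⟨w, hw, hvw⟩⟩ : (A ∩ B).Nonempty := by
    have := Set.ncard_union_add_ncard_inter A B (hSfin.subset hAS) (hSfin.subset hBS)
    have := Set.ncard_le_ncard (Set.union_subset hAS hBS) hSfin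
    exact Set.nonempty_of_ncard_ne_zero (by omega)
  obtain ⟨j, hj⟩ := Nat.exists_eq_add_one_of_ne_zero (hpos w hw)
  have hlt := List.idxOf_lt_length_of_mem (hmem w)
  beta_reduce at hvw
  rw [hj, Nat.add_sub_cancel] at hvw
  have hv' : P[j] = v := by simp [hvw]
  have hw' : P[j + 1] = w := by simp [← hj]
  refine ⟨P.take j, v, w, P.drop (j + 2), ?_, hv.symm, hw⟩
  calc P = P.take j ++ P.drop j := (List.take_append_drop j P).symm
    _ = P.take j ++ P[j] :: P[j + 1] :: P.drop (j + 2) := by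
      rw [List.drop_eq_getElem_cons, List.drop_eq_getElem_cons]
    _ = _ := by rw [hv', hw']

theorem IsHamiltonianPathList.exists_isHamiltonianCycleList
    (hG : G ≤ completeBipartiteGraph α β) {x : α} {y : β} {t : List (α ⊕ β)}
    (hP : G.IsHamiltonianPathList (.inl x :: t ++ [.inr y]))
    (hxy : ¬G.Adj (.inl x) (.inr y))
    (hdeg : Nat.card α < (G.neighborSet (.inl x)).ncard + (G.neighborSet (.inr y)).ncard) :
    ∃ c, G.IsHamiltonianCycleList c := by
  obtain ⟨L₁, v, w, L₂, hsplit, hvy, hxw⟩ := hP.exists_crossing hG hdeg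
  obtain _ | ⟨a, A⟩ := L₁
  · simp only [List.nil_append, List.cons.injEq] at hsplit
    exact absurd (hsplit.1 ▸ hvy) hxy
  simp only [List.cons_append, List.cons.injEq] at hsplit
  obtain ⟨rfl, hsplit⟩ := hsplit
  obtain rfl | ⟨B, b, rfl⟩ := L₂.eq_nil_or_concat'
  · have hsplit' : t ++ [.inr y] = (A ++ [v]) ++ [w] := by simpa using hsplit
    obtain ⟨-, hw⟩ := List.append_inj' hsplit' rfl
    simp only [List.cons.injEq, and_true] at hw
    exact absurd (hw ▸ hxw) hxy
  have hsplit' : t ++ [.inr y] = (A ++ v :: w :: B) ++ [b] := by simpa using hsplit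
  obtain ⟨rfl, hb⟩ := List.append_inj' hsplit' rfl
  simp only [List.cons.injEq, and_true] at hb
  subst hb
  exact ⟨_, hP.isHamiltonianCycleList_of_crossing hvy hxw⟩

theorem exists_isHamiltonianCycleList_of_forall_adj [Finite α] (e : α ≃ β)
    (hall : ∀ a b, G.Adj (.inl a) (.inr b)) : ∃ c, G.IsHamiltonianCycleList c := by
  obtain ⟨la, hnodup, hmem⟩ := Finite.exists_univ_list α
  have hchain : ∀ (l : List α) (z : α),
      (l.flatMap (fun a => [Sum.inl a, Sum.inr (e a)]) ++ [Sum.inl z]).IsChain G.Adj := by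
    intro l z
    induction l with
    | nil => simp
    | cons a l ih =>
      refine .cons (.cons ih ?_) (by simp [hall])
      cases l <;> simp [(hall _ _).symm]
  refine ⟨la.flatMap fun a => [Sum.inl a, Sum.inr (e a)], ?_, ?_, ?_⟩
  · refine List.nodup_flatMap.2 ⟨fun a _ => by simp, hnodup.imp fun hab => ?_⟩
    simp [Ne.symm hab]
  · rintro (a | b)
    · simpa using hmem a
    · simpa using ⟨e.symm b, hmem _, by simp⟩
  · cases la with
    | nil => simp
    | cons a la => simpa using hchain (a :: la) a

theorem exists_isHamiltonianCycleList_of_degree_sum [Fintype α] [Fintype β]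
    (hcard : Fintype.card α = Fintype.card β) (h2 : 2 ≤ Fintype.card α)
    (hG : G ≤ completeBipartiteGraph α β)
    (hdeg : ∀ x y, ¬G.Adj (.inl x) (.inr y) →
      Fintype.card α + 1 ≤ (G.neighborSet (.inl x)).ncard + (G.neighborSet (.inr y)).ncard) :
    ∃ c, G.IsHamiltonianCycleList c := by
  induction G using WellFoundedGT.induction with
  | _ G ih =>
  by_cases hall : ∀ x y, G.Adj (.inl x) (.inr y)
  · exact exists_isHamiltonianCycleList_of_forall_adj (Fintype.equivOfCardEq hcard) hall
  push Not at hall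
  obtain ⟨x, y, hxy⟩ := hall
  have hedge : (edge (Sum.inl x) (Sum.inr y)).Adj (.inl x) (.inr y) := by simp [edge_adj]
  have hH : G ⊔ edge (.inl x) (.inr y) ≤ completeBipartiteGraph α β := by
    refine sup_le hG fun a b hab => ?_
    obtain ⟨⟨rfl, rfl⟩ | ⟨rfl, rfl⟩, -⟩ := (edge_adj _ _ _ _).1 hab <;> simp
  have hdegH : ∀ x' y', ¬(G ⊔ edge (.inl x) (.inr y)).Adj (.inl x') (.inr y') →
      Fintype.card α + 1 ≤ ((G ⊔ edge (.inl x) (.inr y)).neighborSet (.inl x')).ncard +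
        ((G ⊔ edge (.inl x) (.inr y)).neighborSet (.inr y')).ncard := fun x' y' h =>
    (hdeg x' y' fun h' => h (Or.inl h')).trans <|
      add_le_add (ncard_neighborSet_le_of_le le_sup_left _)
        (ncard_neighborSet_le_of_le le_sup_left _)
  obtain ⟨c, hc⟩ := ih _ (left_lt_sup.2 fun h => hxy (h hedge)) hH hdegH
  obtain hG' | ⟨t, ht⟩ :=
    hc.exists_cycle_or_path_of_sup_edge (by rw [Fintype.card_sum]; omega)
  · exact hG'
  · exact ht.exists_isHamiltonianCycleList hG hxy (by simpa using hdeg x y hxy)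

end Bipartite

end SimpleGraph

/-- (Moon–Moser) Let `G` be bipartite with parts `X`, `Y` of equal size `n ≥ 4`. If
`deg x + deg y ≥ n + 1` for every nonadjacent pair `x ∈ X`, `y ∈ Y`, then `G` has a
Hamiltonian cycle. -/
theorem moon_moser (n : ℕ) (hn : 4 ≤ n)
    (G : SimpleGraph (Fin n ⊕ Fin n))
    (hG : G ≤ completeBipartiteGraph (Fin n) (Fin n))
    (hdeg : ∀ (x y : Fin n), ¬ G.Adj (Sum.inl x) (Sum.inr y) →
      n + 1 ≤ (G.neighborSet (Sum.inl x)).ncard + (G.neighborSet (Sum.inr y)).ncard) :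
    ∃ (v : Fin n ⊕ Fin n) (p : G.Walk v v), p.IsHamiltonianCycle := by
  obtain ⟨c, hc⟩ := SimpleGraph.exists_isHamiltonianCycleList_of_degree_sum rfl
    (by rw [Fintype.card_fin]; omega) hG (by simpa using hdeg)
  exact hc.exists_isHamiltonianCycle (by rw [Fintype.card_sum, Fintype.card_fin]; omega)
end
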